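/- arXiv:0806.3177 — 2 statements merged into one kernel-verified Lean document; each statement's English description precedes it below -/
import Mathlib

section
/- Let A be a (possibly noncommutative) ring and e ∈ A an idempotent such that the two-sided ideal AeA is finitely generated as a right ideal of A (this holds in particular when A is right noetherian). Then Ae is finitely generated as a right module over the corner ring eAe; explicitly, there exist finitely many elements r_1, …, r_m ∈ A such that every element of Ae can be written as Σ_{j=1}^m r_j c_j with each c_j ∈ eAe. -/
/-- Let `A` be a ring and `e ∈ A` an idempotent such that the two-sided ideal `AeA`
(the set of finite sums `∑ aᵢ e bᵢ`) is finitely generated as a right ideal of `A`.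
Then `Ae` is finitely generated as a right module over the corner ring `eAe`:
there are finitely many `r₁, …, r_m ∈ A` such that every element `a·e` of `Ae`
can be written as `∑ⱼ rⱼ · cⱼ` with each `cⱼ ∈ eAe`. -/
theorem corner_module_fg (A : Type*) [Ring A] (e : A) (he : e * e = e)
    (hfg : ∃ (m : ℕ) (xgen : Fin m → A),
      (∀ j : Fin m, xgen j ∈
          {z : A | ∃ (n : ℕ) (a b : Fin n → A), z = ∑ i : Fin n, a i * e * b i}) ∧
      ∀ z ∈ {z : A | ∃ (n : ℕ) (a b : Fin n → A), z = ∑ i : Fin n, a i * e * b i},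
        ∃ c : Fin m → A, z = ∑ j : Fin m, xgen j * c j) :
    ∃ (m : ℕ) (r : Fin m → A), ∀ a : A, ∃ c : Fin m → A,
      (∀ j : Fin m, ∃ w : A, c j = e * w * e) ∧ a * e = ∑ j : Fin m, r j * c j := by
  obtain ⟨m, xgen, hmem, hgen⟩ := hfg
  choose n a b hx using hmem
  set σ := (j : Fin m) × Fin (n j) with hσ
  set M := Fintype.card σ with hM
  set E : Fin M ≃ σ := (Fintype.equivFin σ).symm with hE
  refine ⟨M, fun k => a (E k).1 (E k).2, fun z => ?_⟩
  obtain ⟨c, hc⟩ := hgen (z * e) ⟨1, fun _ => z, fun _ => 1, by simp⟩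
  refine ⟨fun k => e * (b (E k).1 (E k).2 * c (E k).1) * e, fun k => ⟨_, rfl⟩, ?_⟩
  calc z * e = (z * e) * e := by rw [mul_assoc, he]
  _ = (∑ j, xgen j * c j) * e := by rw [← hc]
  _ = ∑ j : Fin m, ∑ i : Fin (n j), a j i * (e * (b j i * c j) * e) := by
      rw [Finset.sum_mul]
      refine Finset.sum_congr rfl fun j _ => ?_
      rw [hx j, Finset.sum_mul, Finset.sum_mul]
      exact Finset.sum_congr rfl fun i _ => by simp only [mul_assoc]
  _ = ∑ p : σ, a p.1 p.2 * (e * (b p.1 p.2 * c p.1) * e) := by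
      rw [← Finset.univ_sigma_univ, Finset.sum_sigma]
  _ = ∑ k : Fin M,
        a (E k).1 (E k).2 * (e * (b (E k).1 (E k).2 * c (E k).1) * e) :=
      (Fintype.sum_equiv E _ _ fun k => rfl).symm
end

section
/- Let n ≥ 1 and let P = ℂ[x_0, …, x_n, y_0, …, y_n] be the polynomial ring in 2(n+1) variables. Let the torus T = (ℂ^×)^{n+1} act on P by ℂ-algebra automorphisms determined on the variables by g · x_i = g_{i+1} g_i^{-1} x_i and g · y_i = g_i g_{i+1}^{-1} y_i for g = (g_0, …, g_n) ∈ T, with indices taken modulo n+1. Then the subalgebra of T-invariant polynomials P^T equals the ℂ-subalgebra of P generated by the elements x = x_0 x_1 ⋯ x_n, y = y_0 y_1 ⋯ y_n, and z_i = x_i y_i for 0 ≤ i ≤ n. -/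
open MvPolynomial

noncomputable section

/-- The action of `g ∈ (ℂˣ)^{n+1}` on the polynomial ring
`P = ℂ[x_0, …, x_n, y_0, …, y_n]` (variables indexed by `Fin (n+1) ⊕ Fin (n+1)`,
with `Sum.inl i = xᵢ` and `Sum.inr i = yᵢ`), determined by
`g · xᵢ = g_{i+1} gᵢ⁻¹ xᵢ` and `g · yᵢ = gᵢ g_{i+1}⁻¹ yᵢ` with indices mod `n+1`. -/
def torusAct (n : ℕ) (g : Fin (n + 1) → ℂˣ) :
    MvPolynomial (Fin (n + 1) ⊕ Fin (n + 1)) ℂ →ₐ[ℂ]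
      MvPolynomial (Fin (n + 1) ⊕ Fin (n + 1)) ℂ :=
  MvPolynomial.aeval (fun v => match v with
    | Sum.inl i => MvPolynomial.C ((g (i + 1) * (g i)⁻¹ : ℂˣ) : ℂ) * MvPolynomial.X (Sum.inl i)
    | Sum.inr i => MvPolynomial.C ((g i * (g (i + 1))⁻¹ : ℂˣ) : ℂ) * MvPolynomial.X (Sum.inr i))

/-!
The torus acts diagonally on monomials: writing `eᵢ = aᵢ - bᵢ`, the monomial `x^a y^b` is scaled
by `∏ᵢ gᵢ ^ (e_{i-1} - eᵢ)`. Testing an invariant polynomial against `g = (1, …, 1, 2, 1, …, 1)`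
shows that each of its monomials has `e` constant, and such a monomial is `x^e ∏ zᵢ^{bᵢ}` or
`y^{-e} ∏ zᵢ^{aᵢ}`. Conversely `x`, `y` and the `zᵢ` are invariant, since the scalings of the
`xᵢ` (and of the `yᵢ`) telescope to `1`, and the invariants form a subalgebra.
-/

theorem Finset.prod_pow_add_mul_prod_pow {ι M : Type*} [CommMonoid M] (s : Finset ι)
    (a b : ι → M) (k : ι → ℕ) (m : ℕ) :
    (∏ i ∈ s, a i ^ (k i + m)) * ∏ i ∈ s, b i ^ k i =
      (∏ i ∈ s, a i) ^ m * ∏ i ∈ s, (a i * b i) ^ k i := by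
  simp only [pow_add, mul_pow, prod_mul_distrib, prod_pow]
  ac_rfl

theorem Fin.eq_apply_zero_of_apply_sub_one_eq {α : Type*} {n : ℕ} (f : Fin (n + 1) → α)
    (h : ∀ i, f (i - 1) = f i) (i : Fin (n + 1)) : f i = f 0 := by
  induction i using Fin.induction with
  | zero => rfl
  | succ i ih => rw [← h, ← Fin.coeSucc_eq_succ, add_sub_cancel_right, ih]

theorem eq_zero_of_forall_prod_zpow_eq_one {ι : Type*} [Fintype ι] [DecidableEq ι]
    (k : ι → ℤ) (h : ∀ g : ι → ℂˣ, ∏ i, g i ^ k i = 1) : k = 0 := by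
  funext j
  have htwo : (Units.mk0 (2 : ℂ) two_ne_zero) ^ k j = 1 := by
    rw [← h (Pi.mulSingle j (Units.mk0 2 two_ne_zero)), Fintype.prod_eq_single j]
    · rw [Pi.mulSingle_eq_same]
    · intro i hij
      rw [Pi.mulSingle_eq_of_ne hij, one_zpow]
  have hreal : (((2 : ℝ) ^ k j : ℝ) : ℂ) = 1 := by simpa [Units.ext_iff] using htwo
  exact (zpow_eq_one_iff_right₀ zero_le_two (by norm_num : (2 : ℝ) ≠ 1)).mp (mod_cast hreal)

namespace MvPolynomial

variable {R σ : Type*} [CommSemiring R]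

theorem aeval_C_mul_X_monomial (s : σ → R) (d : σ →₀ ℕ) (c : R) :
    aeval (fun v => C (s v) * X v) (monomial d c) =
      monomial d ((d.prod fun v k => s v ^ k) * c) := by
  rw [aeval_monomial, monomial_eq, algebraMap_eq]
  simp only [mul_pow, C_mul, Finsupp.prod, map_prod, C_pow, Finset.prod_mul_distrib]
  ring

theorem coeff_aeval_C_mul_X (s : σ → R) (p : MvPolynomial σ R) (d : σ →₀ ℕ) :
    coeff d (aeval (fun v => C (s v) * X v) p) = (d.prod fun v k => s v ^ k) * coeff d p := by
  classical
  induction p using MvPolynomial.induction_on' with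
  | monomial e c =>
    rw [aeval_C_mul_X_monomial, coeff_monomial, coeff_monomial]
    split_ifs with h
    · rw [h]
    · rw [mul_zero]
  | add p q hp hq => rw [map_add, coeff_add, coeff_add, hp, hq, mul_add]

end MvPolynomial

namespace TorusInvariants

variable {n : ℕ}

def varWeight (g : Fin (n + 1) → ℂˣ) : Fin (n + 1) ⊕ Fin (n + 1) → ℂˣ
  | .inl i => g (i + 1) * (g i)⁻¹
  | .inr i => g i * (g (i + 1))⁻¹

theorem varWeight_inr (g : Fin (n + 1) → ℂˣ) (i : Fin (n + 1)) :
    varWeight g (.inr i) = (varWeight g (.inl i))⁻¹ := by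
  simp [varWeight]

theorem torusAct_eq_aeval (g : Fin (n + 1) → ℂˣ) :
    torusAct n g = aeval fun v => C (varWeight g v : ℂ) * X v := by
  unfold torusAct
  congr 1
  funext v
  cases v <;> rfl

theorem torusAct_X (g : Fin (n + 1) → ℂˣ) (v : Fin (n + 1) ⊕ Fin (n + 1)) :
    torusAct n g (X v) = C (varWeight g v : ℂ) * X v := by
  rw [torusAct_eq_aeval, aeval_X]

theorem prod_varWeight_inl (g : Fin (n + 1) → ℂˣ) : ∏ i, varWeight g (.inl i) = 1 := by
  simp only [varWeight, Finset.prod_mul_distrib, Finset.prod_inv_distrib]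
  rw [Fintype.prod_equiv (Equiv.addRight 1) (fun i => g (i + 1)) g fun _ => rfl,
    mul_inv_cancel]

def expDiff (d : (Fin (n + 1) ⊕ Fin (n + 1)) →₀ ℕ) (i : Fin (n + 1)) : ℤ :=
  d (.inl i) - d (.inr i)

theorem prod_varWeight_pow (g : Fin (n + 1) → ℂˣ)
    (d : (Fin (n + 1) ⊕ Fin (n + 1)) →₀ ℕ) :
    ∏ v, varWeight g v ^ d v = ∏ i, g i ^ (expDiff d (i - 1) - expDiff d i) := by
  have hinl : ∏ v, varWeight g v ^ d v = ∏ i, (g (i + 1) * (g i)⁻¹) ^ expDiff d i := by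
    rw [Fintype.prod_sum_type, ← Finset.prod_mul_distrib]
    refine Fintype.prod_congr _ _ fun i => ?_
    rw [varWeight_inr, expDiff, zpow_sub, ← zpow_natCast, ← zpow_natCast, inv_zpow]
    rfl
  have hshift : ∏ i, g (i + 1) ^ expDiff d i = ∏ i, g i ^ expDiff d (i - 1) :=
    Fintype.prod_equiv (Equiv.addRight 1) _ _ fun i => by simp
  simp only [hinl, mul_zpow, Finset.prod_mul_distrib, hshift, inv_zpow, zpow_sub]

theorem coeff_torusAct (g : Fin (n + 1) → ℂˣ)
    (p : MvPolynomial (Fin (n + 1) ⊕ Fin (n + 1)) ℂ)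
    (d : (Fin (n + 1) ⊕ Fin (n + 1)) →₀ ℕ) :
    coeff d (torusAct n g p) =
      ((∏ i, g i ^ (expDiff d (i - 1) - expDiff d i) : ℂˣ) : ℂ) * coeff d p := by
  rw [torusAct_eq_aeval, coeff_aeval_C_mul_X, Finsupp.prod_fintype _ _ fun _ => pow_zero _,
    ← prod_varWeight_pow]
  push_cast
  rfl

theorem expDiff_eq_expDiff_zero {p : MvPolynomial (Fin (n + 1) ⊕ Fin (n + 1)) ℂ}
    (hp : ∀ g, torusAct n g p = p) {d : (Fin (n + 1) ⊕ Fin (n + 1)) →₀ ℕ}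
    (hd : d ∈ p.support) (i : Fin (n + 1)) : expDiff d i = expDiff d 0 := by
  have hweight : (fun i => expDiff d (i - 1) - expDiff d i) = 0 := by
    refine eq_zero_of_forall_prod_zpow_eq_one _ fun g => Units.ext ?_
    have hcoeff := congrArg (coeff d) (hp g)
    rw [coeff_torusAct] at hcoeff
    exact mul_right_cancel₀ (mem_support_iff.mp hd) (by rw [hcoeff, Units.val_one, one_mul])
  exact Fin.eq_apply_zero_of_apply_sub_one_eq _ (fun i => sub_eq_zero.mp (congrFun hweight i)) i

def generators (n : ℕ) : Set (MvPolynomial (Fin (n + 1) ⊕ Fin (n + 1)) ℂ) :=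
  {∏ i : Fin (n + 1), X (Sum.inl i), ∏ i : Fin (n + 1), X (Sum.inr i)} ∪
    Set.range fun i : Fin (n + 1) => X (Sum.inl i) * X (Sum.inr i)

theorem monomial_eq_C_mul_prod_inl_mul_prod_inr (d : (Fin (n + 1) ⊕ Fin (n + 1)) →₀ ℕ)
    (c : ℂ) :
    monomial d c = C c * ((∏ i, X (.inl i) ^ d (.inl i)) * ∏ i, X (.inr i) ^ d (.inr i)) := by
  rw [monomial_eq, Finsupp.prod_fintype _ _ fun _ => pow_zero _, Fintype.prod_sum_type]

theorem monomial_mem_adjoin_generators (d : (Fin (n + 1) ⊕ Fin (n + 1)) →₀ ℕ) (c : ℂ)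
    (hd : ∀ i, expDiff d i = expDiff d 0) :
    monomial d c ∈ Algebra.adjoin ℂ (generators n) := by
  set S := Algebra.adjoin ℂ (generators n)
  have hx : ∏ i, X (.inl i) ∈ S := Algebra.subset_adjoin (by simp [generators])
  have hy : ∏ i, X (.inr i) ∈ S := Algebra.subset_adjoin (by simp [generators])
  have hz : ∀ i, X (.inl i) * X (.inr i) ∈ S := fun i =>
    Algebra.subset_adjoin (by simp [generators])
  rw [monomial_eq_C_mul_prod_inl_mul_prod_inr]
  refine mul_mem (S.algebraMap_mem c) ?_
  obtain ⟨m, hm | hm⟩ := Int.eq_nat_or_neg (expDiff d 0)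
  · have hinl : ∀ i, d (.inl i) = d (.inr i) + m := fun i => by
      have := hd i
      simp only [expDiff] at this hm
      omega
    simp only [hinl, Finset.prod_pow_add_mul_prod_pow]
    exact mul_mem (pow_mem hx m) (prod_mem fun i _ => pow_mem (hz i) _)
  · have hinr : ∀ i, d (.inr i) = d (.inl i) + m := fun i => by
      have := hd i
      simp only [expDiff] at this hm
      omega
    simp only [hinr]
    rw [mul_comm, Finset.prod_pow_add_mul_prod_pow]
    exact mul_mem (pow_mem hy m)
      (prod_mem fun i _ => by rw [mul_comm]; exact pow_mem (hz i) _)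

theorem torusAct_prod_X_inl (g : Fin (n + 1) → ℂˣ) :
    torusAct n g (∏ i, X (.inl i)) = ∏ i, X (.inl i) := by
  rw [map_prod]
  simp only [torusAct_X, Finset.prod_mul_distrib, ← map_prod, ← Units.coe_prod,
    prod_varWeight_inl, Units.val_one, map_one, one_mul]

theorem torusAct_prod_X_inr (g : Fin (n + 1) → ℂˣ) :
    torusAct n g (∏ i, X (.inr i)) = ∏ i, X (.inr i) := by
  rw [map_prod]
  simp only [torusAct_X, Finset.prod_mul_distrib, ← map_prod, ← Units.coe_prod,
    varWeight_inr, Finset.prod_inv_distrib, prod_varWeight_inl, inv_one, Units.val_one, map_one,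
    one_mul]

theorem torusAct_X_inl_mul_X_inr (g : Fin (n + 1) → ℂˣ) (i : Fin (n + 1)) :
    torusAct n g (X (.inl i) * X (.inr i)) = X (.inl i) * X (.inr i) := by
  rw [map_mul, torusAct_X, torusAct_X, mul_mul_mul_comm, ← C_mul, ← Units.val_mul,
    varWeight_inr, mul_inv_cancel, Units.val_one, map_one, one_mul]

theorem torusAct_generator (g : Fin (n + 1) → ℂˣ)
    {q : MvPolynomial (Fin (n + 1) ⊕ Fin (n + 1)) ℂ} (hq : q ∈ generators n) :
    torusAct n g q = q := by
  rcases hq with (rfl | rfl) | ⟨i, rfl⟩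
  · exact torusAct_prod_X_inl g
  · exact torusAct_prod_X_inr g
  · exact torusAct_X_inl_mul_X_inr g i

end TorusInvariants

open TorusInvariants in
theorem torus_invariants_eq_adjoin_general (n : ℕ) :
    {p : MvPolynomial (Fin (n + 1) ⊕ Fin (n + 1)) ℂ |
        ∀ g : Fin (n + 1) → ℂˣ, torusAct n g p = p}
      = ↑(Algebra.adjoin ℂ
          ({∏ i : Fin (n + 1), MvPolynomial.X (Sum.inl i),
            ∏ i : Fin (n + 1), MvPolynomial.X (Sum.inr i)} ∪
            Set.range (fun i : Fin (n + 1) =>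
              MvPolynomial.X (Sum.inl i) * MvPolynomial.X (Sum.inr i)) :
            Set (MvPolynomial (Fin (n + 1) ⊕ Fin (n + 1)) ℂ))) := by
  show _ = (Algebra.adjoin ℂ (generators n) :
    Set (MvPolynomial (Fin (n + 1) ⊕ Fin (n + 1)) ℂ))
  refine Set.Subset.antisymm (fun p hp => ?_) (fun p hp g => ?_)
  · rw [p.as_sum]
    exact Subalgebra.sum_mem _ fun d hd =>
      monomial_mem_adjoin_generators d _ (expDiff_eq_expDiff_zero hp hd)
  · have hle : Algebra.adjoin ℂ (generators n) ≤
        AlgHom.equalizer (torusAct n g) (AlgHom.id ℂ _) :=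
      Algebra.adjoin_le fun q hq => torusAct_generator g hq
    exact hle hp

/-- The torus invariants `P^T` of `P = ℂ[x_0, …, x_n, y_0, …, y_n]` under the action
`g · xᵢ = g_{i+1} gᵢ⁻¹ xᵢ`, `g · yᵢ = gᵢ g_{i+1}⁻¹ yᵢ` form exactly the `ℂ`-subalgebra
generated by `x = x_0 ⋯ x_n`, `y = y_0 ⋯ y_n` and `zᵢ = xᵢ yᵢ` for `0 ≤ i ≤ n`. -/
theorem torus_invariants_eq_adjoin (n : ℕ) (hn : 1 ≤ n) :
    {p : MvPolynomial (Fin (n + 1) ⊕ Fin (n + 1)) ℂ |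
        ∀ g : Fin (n + 1) → ℂˣ, torusAct n g p = p}
      = ↑(Algebra.adjoin ℂ
          ({∏ i : Fin (n + 1), MvPolynomial.X (Sum.inl i),
            ∏ i : Fin (n + 1), MvPolynomial.X (Sum.inr i)} ∪
            Set.range (fun i : Fin (n + 1) =>
              MvPolynomial.X (Sum.inl i) * MvPolynomial.X (Sum.inr i)) :
            Set (MvPolynomial (Fin (n + 1) ⊕ Fin (n + 1)) ℂ))) :=
  torus_invariants_eq_adjoin_general n
end
end
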